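/- arXiv:1402.6861 — 2 statements merged into one kernel-verified Lean document; each statement's English description precedes it below -/
import Mathlib

section
/- Let A = ⊕_{i=0}^{2n} A^i be a graded commutative ℝ-algebra with zero differential satisfying the hard Lefschetz property with respect to ω ∈ A^2, and let (A ⊗ Λ(y), d) be the elementary extension with dy = ω. Then every defined m-th order a-Massey product ⟨a; b1, …, b_m⟩ with m ≥ 3 of cohomology classes of (A ⊗ Λ(y), d) contains 0. -/
/-- Product in the elementary extension `A ⊗ Λ(y)` of a graded algebra `A` with zero
differential (`deg y = 1`, `y² = 0`, `y·α = ε(α)·y`): a pair `(α, β)` stands for `α + β·y`,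
and `ε` is the parity involution `ε(α) = (-1)^{|α|} α`. -/
def emul {A : Type*} [Ring A] [Algebra ℝ A] (ε : A →ₗ[ℝ] A) (u v : A × A) : A × A :=
  (u.1 * v.1, u.1 * v.2 + u.2 * ε v.1)

/-- Differential of the elementary extension `(A ⊗ Λ(y), dy = ω)`: `d(α + β·y) = ε(β)·ω`. -/
def eD {A : Type*} [Ring A] [Algebra ℝ A] (ε : A →ₗ[ℝ] A) (ω : A) (u : A × A) : A × A :=
  (ε u.2 * ω, 0)

/-- Ordered product of a list of elements of the extension. -/
def listProd {A : Type*} [Ring A] [Algebra ℝ A] (ε : A →ₗ[ℝ] A)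
    (l : List (A × A)) : A × A :=
  l.foldr (emul ε) (1, 0)

/-! The differential of the elementary extension only sees the `y`-component, so each primitive
`ξᵢ` may be replaced by its `y`-component `βᵢ·y`. Since `y² = 0`, a product with two such factors
vanishes, and for `m ≥ 3` every term of the Massey representative has `m - 1 ≥ 2` of them. -/

section ElementaryExtension

variable {A : Type*} [Ring A] [Algebra ℝ A] (ε : A →ₗ[ℝ] A)

theorem listProd_cons (x : A × A) (l : List (A × A)) :
    listProd ε (x :: l) = emul ε x (listProd ε l) := rfl

theorem emul_eq_zero_of_fst_eq_zero {x y : A × A} (hx : x.1 = 0) (hy : y.1 = 0) :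
    emul ε x y = 0 := by
  simp [emul, hx, hy]

theorem listProd_fst_eq_zero_of_mem {x : A × A} (hx : x.1 = 0) {l : List (A × A)}
    (hmem : x ∈ l) : (listProd ε l).1 = 0 := by
  induction l with
  | nil => simp at hmem
  | cons z l ih =>
    change z.1 * (listProd ε l).1 = 0
    rcases List.mem_cons.mp hmem with rfl | hmem
    · rw [hx, zero_mul]
    · rw [ih hmem, mul_zero]

theorem listProd_eq_zero_of_sublist {x y : A × A} (hx : x.1 = 0) (hy : y.1 = 0)
    {l : List (A × A)} (hsub : [x, y].Sublist l) : listProd ε l = 0 := by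
  induction l with
  | nil => simp at hsub
  | cons z l ih =>
    rw [listProd_cons]
    cases hsub with
    | cons _ hsub => rw [ih hsub]; simp [emul]
    | cons_cons _ hsub =>
      exact emul_eq_zero_of_fst_eq_zero ε hx
        (listProd_fst_eq_zero_of_mem ε hy (List.singleton_sublist.mp hsub))

end ElementaryExtension

theorem exists_sublist_range_ne {m : ℕ} (hm : 3 ≤ m) (k : ℕ) :
    ∃ p q : ℕ, p ≠ k ∧ q ≠ k ∧ [p, q].Sublist (List.range m) := by
  have h3 : (List.range 3).Sublist (List.range m) := List.range_sublist.mpr hm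
  rcases k with _ | _ | k
  · exact ⟨1, 2, by omega, by omega, List.Sublist.trans (by decide) h3⟩
  · exact ⟨0, 2, by omega, by omega, List.Sublist.trans (by decide) h3⟩
  · exact ⟨0, 1, by omega, by omega, List.Sublist.trans (by decide) h3⟩

theorem statement3_general {A : Type*} [Ring A] [Algebra ℝ A] (𝒜 : ℕ → Submodule ℝ A)
    (ω : A) (ε : A →ₗ[ℝ] A) (m : ℕ) (hm : 3 ≤ m) (pa : ℕ) (pb : ℕ → ℕ)
    -- the closed element `a = u.1 + u.2·y` of even degree `pa`:
    (u : A × A)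
    -- the closed elements `bᵢ` of degree `pb i`, `1 ≤ i ≤ m`:
    (bb : ℕ → A × A)
    -- the `a`-Massey product is defined: primitives `ξᵢ` with `dξᵢ = a·bᵢ` exist:
    (ξ : ℕ → A × A)
    (hξ2 : ∀ i, 1 ≤ i → i ≤ m → (ξ i).2 ∈ 𝒜 (pa + pb i - 2))
    (hξd : ∀ i, 1 ≤ i → i ≤ m → eD ε ω (ξ i) = emul ε u (bb i)) :
    ∃ ξ' : ℕ → A × A,
      (∀ i, 1 ≤ i → i ≤ m → (ξ' i).1 ∈ 𝒜 (pa + pb i - 1)) ∧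
      (∀ i, 1 ≤ i → i ≤ m → (ξ' i).2 ∈ 𝒜 (pa + pb i - 2)) ∧
      (∀ i, 1 ≤ i → i ≤ m → eD ε ω (ξ' i) = emul ε u (bb i)) ∧
      ∃ w : A × A,
        (∑ i ∈ Finset.Icc 1 m,
          ((-1 : ℝ) ^ (∑ j ∈ Finset.Ico 1 i, (pa + pb j - 1))) •
            listProd ε ((List.range m).map
              (fun t => if t + 1 = i then bb (t + 1) else ξ' (t + 1)))) = eD ε ω w := by
  refine ⟨fun i => (0, (ξ i).2), fun _ _ _ => Submodule.zero_mem _, hξ2, hξd, 0, ?_⟩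
  rw [show eD ε ω (0 : A × A) = 0 by simp [eD]]
  refine Finset.sum_eq_zero fun i hi => ?_
  obtain ⟨p, q, hp, hq, hsub⟩ := exists_sublist_range_ne hm (i - 1)
  have hi1 : 1 ≤ i := (Finset.mem_Icc.mp hi).1
  set f : ℕ → A × A := fun t => if t + 1 = i then bb (t + 1) else (0, (ξ (t + 1)).2)
  have hf : ∀ t, t ≠ i - 1 → (f t).1 = 0 := fun t ht => by
    simp only [f, if_neg (show t + 1 ≠ i by omega)]
  rw [listProd_eq_zero_of_sublist ε (hf p hp) (hf q hq) (by simpa using hsub.map f), smul_zero]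

/-- Let `A = ⊕_{i=0}^{2n} Aⁱ` be a graded-commutative ℝ-algebra with zero
differential satisfying the hard Lefschetz property with respect to `ω ∈ A²`, and let
`(A ⊗ Λ(y), dy = ω)` be the elementary extension.  Then every defined `m`-th order `a`-Massey
product `⟨a; b₁, …, b_m⟩` with `m ≥ 3` contains `0`: whenever primitives `ξᵢ` with
`dξᵢ = a·bᵢ` exist, one can choose primitives `ξ'ᵢ` for which the representative
`Σᵢ (-1)^{|ξ₁|+⋯+|ξ_{i-1}|} ξ'₁⋯ξ'_{i-1}·bᵢ·ξ'_{i+1}⋯ξ'_m` is exact. -/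
theorem statement3 {A : Type*} [Ring A] [Algebra ℝ A] (𝒜 : ℕ → Submodule ℝ A)
    [GradedAlgebra 𝒜] (n : ℕ) (ω : A) (hω : ω ∈ 𝒜 2)
    (hbound : ∀ i, 2 * n < i → 𝒜 i = ⊥)
    (hcomm : ∀ i j, ∀ u ∈ 𝒜 i, ∀ v ∈ 𝒜 j, u * v = ((-1 : ℝ) ^ (i * j)) • (v * u))
    (hLef : ∀ k ≤ n, ∀ z ∈ 𝒜 (n + k), ∃! β, β ∈ 𝒜 (n - k) ∧ β * ω ^ k = z)
    (ε : A →ₗ[ℝ] A) (hε : ∀ i, ∀ v ∈ 𝒜 i, ε v = ((-1 : ℝ) ^ i) • v)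
    (m : ℕ) (hm : 3 ≤ m)
    (pa : ℕ) (hpaeven : Even pa) (hpa : 0 < pa)
    (pb : ℕ → ℕ) (hpb : ∀ i, 0 < pb i)
    -- the closed element `a = u.1 + u.2·y` of even degree `pa`:
    (u : A × A) (hu1 : u.1 ∈ 𝒜 pa) (hu2 : u.2 ∈ 𝒜 (pa - 1)) (hud : eD ε ω u = 0)
    -- the closed elements `bᵢ` of degree `pb i`, `1 ≤ i ≤ m`:
    (bb : ℕ → A × A)
    (hb1 : ∀ i, 1 ≤ i → i ≤ m → (bb i).1 ∈ 𝒜 (pb i))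
    (hb2 : ∀ i, 1 ≤ i → i ≤ m → (bb i).2 ∈ 𝒜 (pb i - 1))
    (hbd : ∀ i, 1 ≤ i → i ≤ m → eD ε ω (bb i) = 0)
    -- the `a`-Massey product is defined: primitives `ξᵢ` with `dξᵢ = a·bᵢ` exist:
    (ξ : ℕ → A × A)
    (hξ1 : ∀ i, 1 ≤ i → i ≤ m → (ξ i).1 ∈ 𝒜 (pa + pb i - 1))
    (hξ2 : ∀ i, 1 ≤ i → i ≤ m → (ξ i).2 ∈ 𝒜 (pa + pb i - 2))
    (hξd : ∀ i, 1 ≤ i → i ≤ m → eD ε ω (ξ i) = emul ε u (bb i)) :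
    ∃ ξ' : ℕ → A × A,
      (∀ i, 1 ≤ i → i ≤ m → (ξ' i).1 ∈ 𝒜 (pa + pb i - 1)) ∧
      (∀ i, 1 ≤ i → i ≤ m → (ξ' i).2 ∈ 𝒜 (pa + pb i - 2)) ∧
      (∀ i, 1 ≤ i → i ≤ m → eD ε ω (ξ' i) = emul ε u (bb i)) ∧
      ∃ w : A × A,
        (∑ i ∈ Finset.Icc 1 m,
          ((-1 : ℝ) ^ (∑ j ∈ Finset.Ico 1 i, (pa + pb j - 1))) •
            listProd ε ((List.range m).map
              (fun t => if t + 1 = i then bb (t + 1) else ξ' (t + 1)))) = eD ε ω w :=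
  statement3_general 𝒜 ω ε m hm pa pb u bb ξ hξ2 hξd
end

section
/- Let A be a graded commutative ℝ-algebra with A^i = 0 for i > 2n and zero differential, satisfying the hard Lefschetz property with respect to ω ∈ A², and let (A ⊗ Λ(y), dy = ω) be the elementary extension. Suppose a quadruple Massey product ⟨a1, a2, a3, a4⟩ is defined with all deg(a_i) ≤ n. Then each a_i is represented by a closed element α_i ∈ A, and the choice γ_{ii} = α_i, γ_{i,i+1} = β_{i,i+1}·y, γ_{ij} = 0 for j ≥ i+2 satisfies the Massey defining system equations and yields the zero class; hence 0 ∈ ⟨a1, a2, a3, a4⟩. -/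
/-!
Hard Lefschetz makes multiplication by `ω` injective below the middle degree `n`. The diagonal
entries `γᵢᵢ = αᵢ + bᵢ·y` are closed, so `bᵢ·ω = 0` with `deg bᵢ = pᵢ - 1 < n`, whence `bᵢ = 0`.
The `A`-component of `dγᵢ,ᵢ₊₁ = ±γᵢᵢγᵢ₊₁,ᵢ₊₁` and the `y`-component of the equation for
`dγᵢ,ᵢ₊₂` are then exactly the defining-system equations for `αᵢ`, `βᵢ·y` and zeros above,
and for the latter every product `γ'₁ₖ·γ'ₖ₊₁,₄` vanishes.
-/

theorem eq_zero_of_mul_eq_zero_of_hardLefschetz {R A : Type*} [CommSemiring R] [Semiring A]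
    [Module R A] {𝒜 : ℕ → Submodule R A} {n m : ℕ} {ω b : A}
    (hLef : ∀ k ≤ n, ∀ z ∈ 𝒜 (n + k), ∃! β, β ∈ 𝒜 (n - k) ∧ β * ω ^ k = z)
    (hm : m < n) (hb : b ∈ 𝒜 m) (hbω : b * ω = 0) : b = 0 := by
  obtain ⟨k, hk⟩ : ∃ k, n - m = k + 1 := ⟨n - m - 1, by omega⟩
  have hb' : b ∈ 𝒜 (n - (n - m)) := by rwa [Nat.sub_sub_self hm.le]
  have hbpow : b * ω ^ (n - m) = 0 := by rw [hk, pow_succ', ← mul_assoc, hbω, zero_mul]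
  exact (hLef (n - m) (Nat.sub_le n m) 0 (Submodule.zero_mem _)).unique ⟨hb', hbpow⟩
    ⟨Submodule.zero_mem _, zero_mul _⟩

section ElementaryExtension

variable {A : Type*} [Ring A] [Algebra ℝ A] (ε : A →ₗ[ℝ] A)

theorem eD_eq_zero_iff_of_mem {𝒜 : ℕ → Submodule ℝ A} {ω : A}
    (hε : ∀ i, ∀ v ∈ 𝒜 i, ε v = ((-1 : ℝ) ^ i) • v) {u : A × A} {k : ℕ} (hu : u.2 ∈ 𝒜 k) :
    eD ε ω u = 0 ↔ u.2 * ω = 0 := by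
  simp [eD, Prod.ext_iff, hε k u.2 hu]

def masseySum (D : ℕ → ℕ → ℕ) (γ : ℕ → ℕ → A × A) (i j : ℕ) : A × A :=
  ∑ k ∈ Finset.Ico i j, ((-1 : ℝ) ^ (D i k)) • emul ε (γ i k) (γ (k + 1) j)

variable (D : ℕ → ℕ → ℕ) (γ : ℕ → ℕ → A × A) (i : ℕ)

@[simp]
theorem masseySum_self : masseySum ε D γ i i = 0 := by
  simp [masseySum]

theorem masseySum_succ :
    masseySum ε D γ i (i + 1) = ((-1 : ℝ) ^ (D i i)) • emul ε (γ i i) (γ (i + 1) (i + 1)) := by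
  simp [masseySum]

theorem masseySum_add_two :
    masseySum ε D γ i (i + 2) =
      ((-1 : ℝ) ^ (D i i)) • emul ε (γ i i) (γ (i + 1) (i + 2)) +
        ((-1 : ℝ) ^ (D i (i + 1))) • emul ε (γ i (i + 1)) (γ (i + 2) (i + 2)) := by
  rw [masseySum, Finset.sum_Ico_succ_top (by omega), Nat.Ico_succ_singleton,
    Finset.sum_singleton]

theorem masseySum_add_three :
    masseySum ε D γ i (i + 3) =
      ((-1 : ℝ) ^ (D i i)) • emul ε (γ i i) (γ (i + 1) (i + 3)) +
        ((-1 : ℝ) ^ (D i (i + 1))) • emul ε (γ i (i + 1)) (γ (i + 2) (i + 3)) +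
          ((-1 : ℝ) ^ (D i (i + 2))) • emul ε (γ i (i + 2)) (γ (i + 3) (i + 3)) := by
  rw [masseySum, Finset.sum_Ico_succ_top (by omega), Finset.sum_Ico_succ_top (by omega),
    Nat.Ico_succ_singleton, Finset.sum_singleton]

def specialSystem (α β : ℕ → A) (i j : ℕ) : A × A :=
  if j = i then (α i, 0) else if j = i + 1 then (0, β i) else (0, 0)

variable {ε D γ i} (ω : A) (α β : ℕ → A)

theorem eD_specialSystem_self :
    eD ε ω (specialSystem α β i i) = masseySum ε D (specialSystem α β) i i := by
  simp [eD, specialSystem]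

theorem eD_specialSystem_succ (hi : γ i i = (α i, 0)) (hi₁ : γ (i + 1) (i + 1) = (α (i + 1), 0))
    (hβ : (γ i (i + 1)).2 = β i) (h : eD ε ω (γ i (i + 1)) = masseySum ε D γ i (i + 1)) :
    eD ε ω (specialSystem α β i (i + 1)) = masseySum ε D (specialSystem α β) i (i + 1) := by
  rw [masseySum_succ, hi, hi₁] at h
  simpa [masseySum_succ, specialSystem, eD, hβ] using h

theorem eD_specialSystem_add_two (hi : γ i i = (α i, 0))
    (hi₂ : γ (i + 2) (i + 2) = (α (i + 2), 0)) (hβ : (γ i (i + 1)).2 = β i)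
    (hβ₁ : (γ (i + 1) (i + 2)).2 = β (i + 1))
    (h : eD ε ω (γ i (i + 2)) = masseySum ε D γ i (i + 2)) :
    eD ε ω (specialSystem α β i (i + 2)) = masseySum ε D (specialSystem α β) i (i + 2) := by
  have hsnd := congrArg Prod.snd h
  rw [masseySum_add_two, hi, hi₂] at hsnd
  simp only [eD, emul, Prod.snd_add, Prod.smul_snd, hβ, hβ₁, zero_mul, mul_zero, add_zero,
    zero_add] at hsnd
  simpa [masseySum_add_two, specialSystem, eD, emul, Prod.ext_iff] using hsnd

theorem masseySum_specialSystem_add_three :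
    masseySum ε D (specialSystem α β) i (i + 3) = 0 := by
  simp [masseySum_add_three, specialSystem, emul]

end ElementaryExtension

theorem statement13_general {A : Type*} [Ring A] [Algebra ℝ A] (𝒜 : ℕ → Submodule ℝ A)
    (n : ℕ) (ω : A)
    (hLef : ∀ k ≤ n, ∀ z ∈ 𝒜 (n + k), ∃! β, β ∈ 𝒜 (n - k) ∧ β * ω ^ k = z)
    (ε : A →ₗ[ℝ] A) (hε : ∀ i, ∀ v ∈ 𝒜 i, ε v = ((-1 : ℝ) ^ i) • v)
    (p : ℕ → ℕ) (hp : ∀ i, 0 < p i) (hpn : ∀ i, 1 ≤ i → i ≤ 4 → p i ≤ n)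
    (D : ℕ → ℕ → ℕ) (hD : ∀ i j, D i j = (∑ k ∈ Finset.Icc i j, p k) - (j - i))
    (γ : ℕ → ℕ → A × A)
    (hhom1 : ∀ i j, 1 ≤ i → i ≤ j → j ≤ 4 → (γ i j).1 ∈ 𝒜 (D i j))
    (hhom2 : ∀ i j, 1 ≤ i → i ≤ j → j ≤ 4 → (γ i j).2 ∈ 𝒜 (D i j - 1))
    (hsys : ∀ i j, 1 ≤ i → i ≤ j → j ≤ 4 → (i, j) ≠ (1, 4) →
      eD ε ω (γ i j) =
        ∑ k ∈ Finset.Ico i j, ((-1 : ℝ) ^ (D i k)) • emul ε (γ i k) (γ (k + 1) j)) :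
    ∃ α β : ℕ → A, ∃ γ' : ℕ → ℕ → A × A,
      -- each `aᵢ` is represented by the closed element `αᵢ ∈ A`:
      (∀ i, 1 ≤ i → i ≤ 4 → α i ∈ 𝒜 (p i) ∧
        ∃ v : A × A, γ i i - (α i, (0 : A)) = eD ε ω v) ∧
      -- the special defining system:
      (γ' = fun i j => if j = i then (α i, (0 : A))
        else if j = i + 1 then ((0 : A), β i) else (0, 0)) ∧
      (∀ i, 1 ≤ i → i ≤ 3 → β i ∈ 𝒜 (D i (i + 1) - 1)) ∧
      (∀ i j, 1 ≤ i → i ≤ j → j ≤ 4 → (i, j) ≠ (1, 4) →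
        eD ε ω (γ' i j) =
          ∑ k ∈ Finset.Ico i j, ((-1 : ℝ) ^ (D i k)) • emul ε (γ' i k) (γ' (k + 1) j)) ∧
      -- whose associated Massey cocycle is zero:
      (∑ k ∈ Finset.Ico 1 4, ((-1 : ℝ) ^ (D 1 k)) • emul ε (γ' 1 k) (γ' (k + 1) 4)) = 0 := by
  have hDii (i : ℕ) : D i i = p i := by simp [hD]
  have hdiag : ∀ i, 1 ≤ i → i ≤ 4 → γ i i = ((γ i i).1, 0) := by
    intro i h1 h4
    have hmem : (γ i i).2 ∈ 𝒜 (p i - 1) := hDii i ▸ hhom2 i i h1 le_rfl h4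
    have hclosed : eD ε ω (γ i i) = 0 := by
      simpa using hsys i i h1 le_rfl h4 (by simp; omega)
    have hlow : p i - 1 < n := by have := hp i; have := hpn i h1 h4; omega
    exact Prod.ext rfl <| eq_zero_of_mul_eq_zero_of_hardLefschetz hLef hlow hmem <|
      (eD_eq_zero_iff_of_mem ε hε hmem).1 hclosed
  refine ⟨fun i => (γ i i).1, fun i => (γ i (i + 1)).2, specialSystem _ _, ?_, rfl,
    fun i h1 h3 => hhom2 i (i + 1) h1 (by omega) (by omega), ?_,
    masseySum_specialSystem_add_three (i := 1) ..⟩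
  · intro i h1 h4
    refine ⟨hDii i ▸ hhom1 i i h1 le_rfl h4, 0, ?_⟩
    rw [← hdiag i h1 h4, sub_self]
    simp [eD, Prod.ext_iff]
  · intro i j h1 hij h4 hne
    obtain rfl | rfl | rfl : j = i ∨ j = i + 1 ∨ j = i + 2 := by simp at hne; omega
    · exact eD_specialSystem_self ω _ _
    · exact eD_specialSystem_succ ω _ _ (hdiag i h1 (by omega)) (hdiag (i + 1) (by omega) h4)
        rfl (hsys i (i + 1) h1 (by omega) h4 (by simp; omega))
    · exact eD_specialSystem_add_two ω _ _ (hdiag i h1 (by omega)) (hdiag (i + 2) (by omega) h4)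
        rfl rfl (hsys i (i + 2) h1 (by omega) h4 (by simp; omega))

/-- Let `A` be a graded-commutative ℝ-algebra with `Aⁱ = 0` for `i > 2n`,
zero differential, satisfying hard Lefschetz with respect to `ω ∈ A²`, and let
`(A ⊗ Λ(y), dy = ω)` be the elementary extension.  Suppose a quadruple Massey product
`⟨a₁, a₂, a₃, a₄⟩` is defined, with all `deg aᵢ = pᵢ ≤ n`, by a defining system `γ` with
homogeneous entries of degrees `D i j = Σ_{k=i}^{j} p_k - (j-i)`.  Then each `aᵢ` is
represented by a closed element `αᵢ ∈ A`, and the choice `γ'_{ii} = αᵢ`,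
`γ'_{i,i+1} = β_{i,i+1}·y`, `γ'_{ij} = 0` for `j ≥ i+2` is a defining system whose associated
Massey cocycle is zero; hence `0 ∈ ⟨a₁, a₂, a₃, a₄⟩`. -/
theorem statement13 {A : Type*} [Ring A] [Algebra ℝ A] (𝒜 : ℕ → Submodule ℝ A)
    [GradedAlgebra 𝒜] (n : ℕ) (ω : A) (hω : ω ∈ 𝒜 2)
    (hbound : ∀ i, 2 * n < i → 𝒜 i = ⊥)
    (hcomm : ∀ i j, ∀ u ∈ 𝒜 i, ∀ v ∈ 𝒜 j, u * v = ((-1 : ℝ) ^ (i * j)) • (v * u))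
    (hLef : ∀ k ≤ n, ∀ z ∈ 𝒜 (n + k), ∃! β, β ∈ 𝒜 (n - k) ∧ β * ω ^ k = z)
    (ε : A →ₗ[ℝ] A) (hε : ∀ i, ∀ v ∈ 𝒜 i, ε v = ((-1 : ℝ) ^ i) • v)
    (p : ℕ → ℕ) (hp : ∀ i, 0 < p i) (hpn : ∀ i, 1 ≤ i → i ≤ 4 → p i ≤ n)
    (D : ℕ → ℕ → ℕ) (hD : ∀ i j, D i j = (∑ k ∈ Finset.Icc i j, p k) - (j - i))
    (γ : ℕ → ℕ → A × A)
    (hhom1 : ∀ i j, 1 ≤ i → i ≤ j → j ≤ 4 → (γ i j).1 ∈ 𝒜 (D i j))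
    (hhom2 : ∀ i j, 1 ≤ i → i ≤ j → j ≤ 4 → (γ i j).2 ∈ 𝒜 (D i j - 1))
    (hsys : ∀ i j, 1 ≤ i → i ≤ j → j ≤ 4 → (i, j) ≠ (1, 4) →
      eD ε ω (γ i j) =
        ∑ k ∈ Finset.Ico i j, ((-1 : ℝ) ^ (D i k)) • emul ε (γ i k) (γ (k + 1) j)) :
    ∃ α β : ℕ → A, ∃ γ' : ℕ → ℕ → A × A,
      -- each `aᵢ` is represented by the closed element `αᵢ ∈ A`:
      (∀ i, 1 ≤ i → i ≤ 4 → α i ∈ 𝒜 (p i) ∧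
        ∃ v : A × A, γ i i - (α i, (0 : A)) = eD ε ω v) ∧
      -- the special defining system:
      (γ' = fun i j => if j = i then (α i, (0 : A))
        else if j = i + 1 then ((0 : A), β i) else (0, 0)) ∧
      (∀ i, 1 ≤ i → i ≤ 3 → β i ∈ 𝒜 (D i (i + 1) - 1)) ∧
      (∀ i j, 1 ≤ i → i ≤ j → j ≤ 4 → (i, j) ≠ (1, 4) →
        eD ε ω (γ' i j) =
          ∑ k ∈ Finset.Ico i j, ((-1 : ℝ) ^ (D i k)) • emul ε (γ' i k) (γ' (k + 1) j)) ∧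
      -- whose associated Massey cocycle is zero:
      (∑ k ∈ Finset.Ico 1 4, ((-1 : ℝ) ^ (D 1 k)) • emul ε (γ' 1 k) (γ' (k + 1) 4)) = 0 :=
  statement13_general 𝒜 n ω hLef ε hε p hp hpn D hD γ hhom1 hhom2 hsys
end
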